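/- Let λ ∈ ℝ, let I ⊆ ℝ be an open interval, and let b : I → ℝ be a twice differentiable function with b(s) > 0 for all s ∈ I, satisfying the Schouten soliton ODE b(s)·b''(s) − (b'(s))² + 6λ·b'(s) − 8λ² = 0 on I. Then the function v : I → ℝ defined by v(s) = b(s)·(b'(s) − 4λ) is differentiable on I and satisfies v'(s) = (2·(b'(s) − λ) / b(s)) · v(s) for all s ∈ I. -/

import Mathlib

/-! Substituting `b b'' = b'² − 6λ b' + 8λ²` from the ODE into the product rule
`v' = b' (b' − 4λ) + b b''` gives `v' = 2 (b' − λ)(b' − 4λ)`, and dividing by `b > 0`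
turns the factor `b' − 4λ` back into `v / b`. -/

theorem hasDerivAt_mul_sub_of_schouten_ode {b b' : ℝ → ℝ} {b'' lam s : ℝ}
    (hb : HasDerivAt b (b' s) s) (hb' : HasDerivAt b' b'' s)
    (hode : b s * b'' - b' s ^ 2 + 6 * lam * b' s - 8 * lam ^ 2 = 0) :
    HasDerivAt (fun t => b t * (b' t - 4 * lam)) (2 * (b' s - lam) * (b' s - 4 * lam)) s := by
  refine (hb.mul (hb'.sub_const (4 * lam))).congr_deriv ?_
  linear_combination hode

theorem stmt_3_general (lam : ℝ) (I : Set ℝ)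
    (b b' b'' : ℝ → ℝ)
    (hb : ∀ s ∈ I, HasDerivAt b (b' s) s)
    (hb' : ∀ s ∈ I, HasDerivAt b' (b'' s) s)
    (hpos : ∀ s ∈ I, 0 < b s)
    (hode : ∀ s ∈ I, b s * b'' s - (b' s) ^ 2 + 6 * lam * b' s - 8 * lam ^ 2 = 0) :
    ∀ s ∈ I, HasDerivAt (fun t => b t * (b' t - 4 * lam))
      ((2 * (b' s - lam) / b s) * (b s * (b' s - 4 * lam))) s := by
  intro s hs
  convert hasDerivAt_mul_sub_of_schouten_ode (hb s hs) (hb' s hs) (hode s hs) using 1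
  field_simp [(hpos s hs).ne']

/-- If `b > 0` satisfies the Schouten soliton ODE on `I`, then
`v = b·(b' − 4λ)` satisfies `v' = (2(b' − λ)/b)·v` on `I`. -/
theorem stmt_3 (lam : ℝ) (I : Set ℝ) (hIopen : IsOpen I) (hIinterval : I.OrdConnected)
    (b b' b'' : ℝ → ℝ)
    (hb : ∀ s ∈ I, HasDerivAt b (b' s) s)
    (hb' : ∀ s ∈ I, HasDerivAt b' (b'' s) s)
    (hpos : ∀ s ∈ I, 0 < b s)
    (hode : ∀ s ∈ I, b s * b'' s - (b' s) ^ 2 + 6 * lam * b' s - 8 * lam ^ 2 = 0) :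
    ∀ s ∈ I, HasDerivAt (fun t => b t * (b' t - 4 * lam))
      ((2 * (b' s - lam) / b s) * (b s * (b' s - 4 * lam))) s :=
  stmt_3_general lam I b b' b'' hb hb' hpos hode
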